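/- Let k be a field of characteristic p > 0 and let f, g be polynomials over k with g ≠ 0. Then the rational function f/g^p is exact (i.e., is the formal derivative of some rational function in k(x)) if and only if the coefficient of x^j in f is zero for every natural number j with j ≡ p − 1 (mod p). -/

import Mathlib

open Polynomial

/-- `HasDerivRF f g` means `g` is the formal derivative of the rational function `f` in `k(x)`:
if `f = u / v` with `v ≠ 0`, then `g = (u' v - u v') / v ^ 2`. -/
def HasDerivRF {k : Type*} [Field k] (f g : RatFunc k) : Prop :=
  ∃ u v : Polynomial k, v ≠ 0 ∧
    f = algebraMap (Polynomial k) (RatFunc k) u / algebraMap (Polynomial k) (RatFunc k) v ∧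
    g = algebraMap (Polynomial k) (RatFunc k)
          (Polynomial.derivative u * v - u * Polynomial.derivative v) /
        algebraMap (Polynomial k) (RatFunc k) (v ^ 2)

def IsExactRF {k : Type*} [Field k] (g : RatFunc k) : Prop := ∃ f : RatFunc k, HasDerivRF f g

/-!
In characteristic `p`, `d/dx` kills `X ^ (j + 1)` exactly when `p ∣ j + 1`, so the coefficient
condition says that `f` has a polynomial antiderivative `w`; then `f / g ^ p = (w / g ^ p)'`
because `g ^ p` is a constant. Conversely, if `f / g ^ p = (u / v)'`, clearing denominators gives
`f * v ^ (2 * p) = (u * v ^ (2 * p - 1) * g ^ p)'`. The coefficients of a polynomial `F` in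
degrees `≡ -1 (mod p)` are those of `contract p (X * F)`, and multiplying `F` by a `p`-th
power `h ^ p = expand p (contract p (h ^ p))` multiplies `contract p (X * F)` by the nonzero
`contract p (h ^ p)`. Hence `f` has an antiderivative as soon as `f * h ^ p` does.
-/

theorem Nat.modEq_sub_one_iff_dvd_succ {p j : ℕ} (hp : 0 < p) :
    j ≡ p - 1 [MOD p] ↔ p ∣ j + 1 := by
  rw [← (Nat.ModEq.refl 1).add_iff_right, Nat.sub_add_cancel hp, Nat.ModEq, Nat.mod_self,
    Nat.dvd_iff_mod_eq_zero]

namespace Polynomial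

theorem derivative_pow_char {R : Type*} [CommSemiring R] (p : ℕ) [CharP R p] (g : R[X]) :
    derivative (g ^ p) = 0 := by
  rw [derivative_pow, CharP.cast_eq_zero, map_zero, zero_mul, zero_mul]

theorem derivative_mul_pow_two_mul_sub_one {R : Type*} [CommRing R] (p : ℕ) [CharP R p]
    (hp : p ≠ 0) (u v : R[X]) :
    derivative (u * v ^ (2 * p - 1)) =
      (derivative u * v - u * derivative v) * v ^ (2 * p - 2) := by
  obtain ⟨q, rfl⟩ : ∃ q, p = q + 1 := ⟨p - 1, by omega⟩
  have hchar : ((q + 1 : ℕ) : R) = 0 := CharP.cast_eq_zero R _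
  have hcast : ((2 * q + 1 : ℕ) : R) = -1 := by
    push_cast at hchar ⊢
    linear_combination 2 * hchar
  rw [show 2 * (q + 1) - 1 = 2 * q + 1 by omega, show 2 * (q + 1) - 2 = 2 * q by omega,
    derivative_mul, derivative_pow, Nat.add_sub_cancel, hcast, map_neg, map_one, pow_succ]
  ring

theorem contract_X_mul_eq_zero_iff {R : Type*} [CommSemiring R] {p : ℕ} (hp : p ≠ 0)
    (f : R[X]) :
    contract p (X * f) = 0 ↔ ∀ j, p ∣ j + 1 → f.coeff j = 0 := by
  simp only [Polynomial.ext_iff, coeff_contract hp, coeff_zero]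
  constructor
  · rintro h j ⟨n, hn⟩
    rw [← coeff_X_mul, hn, mul_comm p]
    exact h n
  · intro h n
    rcases Nat.eq_zero_or_pos (n * p) with hn | hn
    · rw [hn, coeff_X_mul_zero]
    · obtain ⟨j, hj⟩ := Nat.exists_eq_add_of_lt hn
      rw [zero_add] at hj
      rw [hj, coeff_X_mul]
      exact h j (hj ▸ Dvd.intro_left n rfl)

theorem contract_mul_pow_char {R : Type*} [CommRing R] [NoZeroDivisors R] (p : ℕ) [CharP R p]
    (hp : p ≠ 0) (f g : R[X]) : contract p (f * g ^ p) = contract p f * contract p (g ^ p) := by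
  conv_lhs => rw [← expand_contract p (derivative_pow_char p g) hp]
  exact contract_mul_expand hp f _

theorem exists_derivative_eq_iff {k : Type*} [Field k] (p : ℕ) [CharP k p] (f : k[X]) :
    (∃ w, derivative w = f) ↔ ∀ j, p ∣ j + 1 → f.coeff j = 0 := by
  constructor
  · rintro ⟨w, rfl⟩ j hj
    rw [coeff_derivative, ← Nat.cast_succ, (CharP.cast_eq_zero_iff k p _).2 hj, mul_zero]
  · intro h
    refine ⟨∑ j ∈ f.support, monomial (j + 1) (f.coeff j / (j + 1)), ext fun j => ?_⟩
    simp only [coeff_derivative, finsetSum_coeff, coeff_monomial, add_left_inj,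
      Finset.sum_ite_eq']
    split_ifs with hj
    · have hj1 : (j + 1 : k) ≠ 0 := by
        exact_mod_cast (CharP.cast_eq_zero_iff k p _).not.2
          fun hp => mem_support_iff.1 hj (h j hp)
      field_simp
    · rw [zero_mul, notMem_support_iff.1 hj]

theorem exists_derivative_eq_mul_pow_iff {k : Type*} [Field k] (p : ℕ) [CharP k p] (hp : p ≠ 0)
    {h : k[X]} (hh : h ≠ 0) (f : k[X]) :
    (∃ w, derivative w = f * h ^ p) ↔ ∃ w, derivative w = f := by
  have hc : contract p (h ^ p) ≠ 0 := fun h0 => pow_ne_zero p hh <| by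
    rw [← expand_contract p (derivative_pow_char p h) hp, h0, map_zero]
  rw [exists_derivative_eq_iff p, exists_derivative_eq_iff p, ← contract_X_mul_eq_zero_iff hp,
    ← contract_X_mul_eq_zero_iff hp, ← mul_assoc, contract_mul_pow_char p hp, mul_eq_zero,
    or_iff_left hc]

end Polynomial

theorem hasDerivRF_div_of_derivative_eq_zero {k : Type*} [Field k] {v : k[X]} (hv : v ≠ 0)
    (hv' : derivative v = 0) (u : k[X]) :
    HasDerivRF (algebraMap k[X] (RatFunc k) u / algebraMap k[X] (RatFunc k) v)
      (algebraMap k[X] (RatFunc k) (derivative u) / algebraMap k[X] (RatFunc k) v) := by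
  refine ⟨u, v, hv, rfl, ?_⟩
  rw [hv', mul_zero, sub_zero, pow_two, map_mul, map_mul,
    mul_div_mul_right _ _ (RatFunc.algebraMap_ne_zero hv)]

/-- Over a field of characteristic `p > 0`, `f/g^p` is exact iff every coefficient of `f` in
degree `j ≡ p - 1 (mod p)` vanishes. -/
theorem stmt10 {k : Type*} [Field k] (p : ℕ) [CharP k p] (hp : 0 < p)
    (f g : Polynomial k) (hg : g ≠ 0) :
    IsExactRF (algebraMap (Polynomial k) (RatFunc k) f /
        algebraMap (Polynomial k) (RatFunc k) (g ^ p)) ↔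
      ∀ j : ℕ, j ≡ p - 1 [MOD p] → f.coeff j = 0 := by
  have hgp : g ^ p ≠ 0 := pow_ne_zero p hg
  rw [show (∀ j : ℕ, j ≡ p - 1 [MOD p] → f.coeff j = 0) ↔ ∃ w, derivative w = f by
    simp only [Nat.modEq_sub_one_iff_dvd_succ hp, exists_derivative_eq_iff p]]
  constructor
  · rintro ⟨-, u, v, hv, -, hf⟩
    rw [div_eq_div_iff (RatFunc.algebraMap_ne_zero hgp)
      (RatFunc.algebraMap_ne_zero (pow_ne_zero 2 hv)), ← map_mul, ← map_mul] at hf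
    have key := RatFunc.algebraMap_injective k hf
    rw [← exists_derivative_eq_mul_pow_iff p hp.ne' (pow_ne_zero 2 hv)]
    refine ⟨u * v ^ (2 * p - 1) * g ^ p, ?_⟩
    rw [derivative_mul, derivative_pow_char, mul_zero, add_zero,
      derivative_mul_pow_two_mul_sub_one p hp.ne']
    calc _ = f * v ^ 2 * v ^ (2 * p - 2) := by rw [key]; ring
      _ = f * (v ^ 2) ^ p := by rw [mul_assoc, ← pow_add, ← pow_mul]; congr 2; omega
  · rintro ⟨w, rfl⟩
    exact ⟨_, hasDerivRF_div_of_derivative_eq_zero hgp (derivative_pow_char p g) w⟩
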